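/- Let f : ℝ^d → ℝ^n be continuously differentiable on a convex open set containing the segment from θ₀ to θ, with Jacobian J. Suppose ‖J(ξ) − J(θ₀)‖ ≤ (1 − β)·σ_min(J(θ₀)) for every ξ on the segment, where β ∈ (0,1) and σ_min(J(θ₀)) > 0. Then ‖f(θ) − f(θ₀)‖ ≥ β·σ_min(J(θ₀))·‖θ − θ₀‖. -/

import Mathlib

/-!
The mean value inequality applied to `f - J(θ₀)` on the segment bounds the linearization error
`‖f θ - f θ₀ - J(θ₀)(θ - θ₀)‖` by `(1 - β) σ_min ‖θ - θ₀‖`, while `‖J(θ₀)(θ - θ₀)‖ ≥ σ_min ‖θ - θ₀‖`;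
the reverse triangle inequality leaves `β σ_min ‖θ - θ₀‖`.
-/

open Matrix

/-- Smallest singular value of a continuous linear map between Euclidean spaces,
defined as the infimum of `‖T v‖` over unit vectors `v`. -/
noncomputable def sigmaMin {d n : ℕ}
    (T : EuclideanSpace ℝ (Fin d) →L[ℝ] EuclideanSpace ℝ (Fin n)) : ℝ :=
  ⨅ v : {v : EuclideanSpace ℝ (Fin d) // ‖v‖ = 1}, ‖T v‖

lemma sigmaMin_mul_norm_le {d n : ℕ}
    (T : EuclideanSpace ℝ (Fin d) →L[ℝ] EuclideanSpace ℝ (Fin n))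
    (v : EuclideanSpace ℝ (Fin d)) :
    sigmaMin T * ‖v‖ ≤ ‖T v‖ := by
  rcases eq_or_ne v 0 with rfl | hv
  · simp
  have hbdd : BddBelow (Set.range fun u : {u : EuclideanSpace ℝ (Fin d) // ‖u‖ = 1} => ‖T u‖) :=
    ⟨0, by rintro _ ⟨u, rfl⟩; positivity⟩
  calc sigmaMin T * ‖v‖ ≤ ‖T (‖v‖⁻¹ • v)‖ * ‖v‖ := by
        gcongr
        exact ciInf_le hbdd ⟨_, norm_smul_inv_norm hv⟩
    _ = ‖T v‖ := by
        rw [map_smul, norm_smul, norm_inv, norm_norm]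
        field_simp

theorem stmt14_general (d n : ℕ)
    (f : EuclideanSpace ℝ (Fin d) → EuclideanSpace ℝ (Fin n))
    (s : Set (EuclideanSpace ℝ (Fin d))) (hs : IsOpen s)
    (θ₀ θ : EuclideanSpace ℝ (Fin d)) (hseg : segment ℝ θ₀ θ ⊆ s)
    (hf : ContDiffOn ℝ 1 f s)
    (β : ℝ)
    (hJ : ∀ ξ ∈ segment ℝ θ₀ θ,
      ‖fderiv ℝ f ξ - fderiv ℝ f θ₀‖ ≤ (1 - β) * sigmaMin (fderiv ℝ f θ₀)) :
    β * sigmaMin (fderiv ℝ f θ₀) * ‖θ - θ₀‖ ≤ ‖f θ - f θ₀‖ := by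
  set J₀ := fderiv ℝ f θ₀
  have hdiff : ∀ ξ ∈ segment ℝ θ₀ θ, DifferentiableAt ℝ f ξ := fun ξ hξ =>
    (hf.contDiffAt (hs.mem_nhds (hseg hξ))).differentiableAt one_ne_zero
  have hlin : ‖f θ - f θ₀ - J₀ (θ - θ₀)‖ ≤ (1 - β) * sigmaMin J₀ * ‖θ - θ₀‖ :=
    (convex_segment θ₀ θ).norm_image_sub_le_of_norm_fderiv_le' hdiff hJ
      (left_mem_segment ℝ θ₀ θ) (right_mem_segment ℝ θ₀ θ)
  have hsing : sigmaMin J₀ * ‖θ - θ₀‖ ≤ ‖J₀ (θ - θ₀)‖ := sigmaMin_mul_norm_le J₀ (θ - θ₀)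
  have htri : ‖J₀ (θ - θ₀)‖ ≤ ‖f θ - f θ₀‖ + ‖f θ - f θ₀ - J₀ (θ - θ₀)‖ := by
    simpa using norm_sub_le (f θ - f θ₀) (f θ - f θ₀ - J₀ (θ - θ₀))
  linarith

/-- Local lower bound for differentiable maps: if the Jacobian deviates from `J(θ₀)` by at most
`(1−β)σ_min(J(θ₀))` along the segment from `θ₀` to `θ`, then
`‖f(θ) − f(θ₀)‖ ≥ β σ_min(J(θ₀)) ‖θ − θ₀‖`. -/
theorem stmt14 (d n : ℕ)
    (f : EuclideanSpace ℝ (Fin d) → EuclideanSpace ℝ (Fin n))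
    (s : Set (EuclideanSpace ℝ (Fin d))) (hs : IsOpen s) (hconv : Convex ℝ s)
    (θ₀ θ : EuclideanSpace ℝ (Fin d)) (hseg : segment ℝ θ₀ θ ⊆ s)
    (hf : ContDiffOn ℝ 1 f s)
    (β : ℝ) (hβ0 : 0 < β) (hβ1 : β < 1)
    (hσ : 0 < sigmaMin (fderiv ℝ f θ₀))
    (hJ : ∀ ξ ∈ segment ℝ θ₀ θ,
      ‖fderiv ℝ f ξ - fderiv ℝ f θ₀‖ ≤ (1 - β) * sigmaMin (fderiv ℝ f θ₀)) :
    β * sigmaMin (fderiv ℝ f θ₀) * ‖θ - θ₀‖ ≤ ‖f θ - f θ₀‖ :=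
  stmt14_general d n f s hs θ₀ θ hseg hf β hJ
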